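/- Fix a prime p ≥ 5 and a prime l ≠ p with l ≥ 5. The number of pairs (A, B) ∈ (ℤ/l^{p+1}ℤ)² such that (A, B) mod l ≠ (0,0), l^p divides 4A³ + 27B², and l^{p+1} does not divide 4A³ + 27B², equals l^p (l − 1)². -/

import Mathlib

/-!
In a commutative ring where `2` and `3` are units, the solutions of `4a³ + 27b² = 0` with `a` or
`b` a unit are exactly the points `(-3t², 2t³)`, `t` a unit, each obtained once. Hence there are
`φ(lᵏ) = lᵏ⁻¹(l - 1)` primitive solutions modulo `lᵏ`. Whether `lᵖ ∣ 4A³ + 27B²` depends only on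
`(A, B)` modulo `lᵖ`, so `l² φ(lᵖ)` primitive pairs modulo `lᵖ⁺¹` satisfy it; discarding the
`φ(lᵖ⁺¹)` of them with `lᵖ⁺¹ ∣ 4A³ + 27B²` leaves `lᵖ⁺¹(l - 1) - lᵖ(l - 1) = lᵖ(l - 1)²`.
-/

open Finset

section DiscriminantLocus

variable {R : Type*} [CommRing R]

theorem isUnit_and_isUnit_of_four_mul_cube_add_twentySeven_mul_sq_eq_zero
    (h2 : IsUnit (2 : R)) (h3 : IsUnit (3 : R)) {a b : R} (h : 4 * a ^ 3 + 27 * b ^ 2 = 0)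
    (hab : IsUnit a ∨ IsUnit b) : IsUnit a ∧ IsUnit b := by
  have h4 : IsUnit (4 : R) := by simpa [show (2 : R) ^ 2 = 4 by norm_num] using h2.pow 2
  have h27 : IsUnit (27 : R) := by simpa [show (3 : R) ^ 3 = 27 by norm_num] using h3.pow 3
  have hb : 27 * b ^ 2 = -(4 * a ^ 3) := by linear_combination h
  rcases hab with ha | hb'
  · refine ⟨ha, (isUnit_pow_iff two_ne_zero).mp (h27.mul_left_iff.mp ?_)⟩
    rw [hb]
    exact (h4.mul (ha.pow 3)).neg
  · refine ⟨(isUnit_pow_iff three_ne_zero).mp (h4.mul_left_iff.mp ?_), hb'⟩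
    rw [show 4 * a ^ 3 = -(27 * b ^ 2) by linear_combination h]
    exact (h27.mul (hb'.pow 2)).neg

noncomputable def unitsEquivPrimitiveDiscriminantZero (h2 : IsUnit (2 : R))
    (h3 : IsUnit (3 : R)) :
    Rˣ ≃ {ab : R × R // (IsUnit ab.1 ∨ IsUnit ab.2) ∧ 4 * ab.1 ^ 3 + 27 * ab.2 ^ 2 = 0} :=
  Equiv.ofBijective
    (fun t => ⟨(-3 * t ^ 2, 2 * t ^ 3), Or.inr (h2.mul (t.isUnit.pow 3)), by ring⟩)
    (by
      constructor
      · intro t s hts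
        simp only [Subtype.mk.injEq, Prod.mk.injEq] at hts
        have hsq : t ^ 2 = s ^ 2 := Units.ext <| by
          push_cast
          exact h3.neg.mul_left_cancel (by linear_combination hts.1)
        have hcube : t ^ 3 = s ^ 3 := Units.ext <| by
          push_cast
          exact h2.mul_left_cancel hts.2
        calc t = t ^ 3 * (t ^ 2)⁻¹ := by group
          _ = s ^ 3 * (s ^ 2)⁻¹ := by rw [hsq, hcube]
          _ = s := by group
      · rintro ⟨⟨a, b⟩, hab, h⟩
        obtain ⟨ha, hb⟩ :=
          isUnit_and_isUnit_of_four_mul_cube_add_twentySeven_mul_sq_eq_zero h2 h3 h hab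
        -- `t = -3b / (2a)`
        obtain ⟨x, hx⟩ := (h2.mul ha).exists_left_inv
        have ht : IsUnit (-3 * b * x) := (h3.neg.mul hb).mul (IsUnit.of_mul_eq_one _ hx)
        refine ⟨ht.unit, Subtype.ext (Prod.ext ?_ ?_)⟩
        · apply ((h2.mul ha).pow 2).mul_right_cancel
          simp only [ht.unit_spec]
          linear_combination (-(1 : R)) * h - 27 * b ^ 2 * (2 * a * x + 1) * hx
        · apply ((h2.mul ha).pow 3).mul_right_cancel
          simp only [ht.unit_spec]
          linear_combination (-2 * b) * h - 54 * b ^ 3 * ((2 * a * x) ^ 2 + 2 * a * x + 1) * hx)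

end DiscriminantLocus

theorem card_primitive_discriminant_zero_zmod {n : ℕ} [NeZero n] (hn : n.Coprime 6)
    [DecidablePred fun ab : ZMod n × ZMod n =>
      (IsUnit ab.1 ∨ IsUnit ab.2) ∧ 4 * ab.1 ^ 3 + 27 * ab.2 ^ 2 = 0] :
    (univ.filter fun ab : ZMod n × ZMod n =>
      (IsUnit ab.1 ∨ IsUnit ab.2) ∧ 4 * ab.1 ^ 3 + 27 * ab.2 ^ 2 = 0).card = n.totient := by
  have hunit (c : ℕ) (hc : c ∣ 6) : IsUnit (c : ZMod n) :=
    (ZMod.isUnit_iff_coprime c n).mpr (hn.coprime_dvd_right hc).symm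
  have h2 : IsUnit (2 : ZMod n) := by exact_mod_cast hunit 2 (by norm_num)
  have h3 : IsUnit (3 : ZMod n) := by exact_mod_cast hunit 3 (by norm_num)
  rw [← Fintype.card_subtype, ← Fintype.card_congr (unitsEquivPrimitiveDiscriminantZero h2 h3),
    ZMod.card_units_eq_totient]

theorem card_filter_range_prod_eq_card_filter_zmod {n : ℕ} [NeZero n]
    (P : ZMod n × ZMod n → Prop) [DecidablePred P] :
    ((range n ×ˢ range n).filter fun AB : ℕ × ℕ => P (AB.1, AB.2)).card
      = (univ.filter P).card := by
  apply card_nbij' (fun AB => ((AB.1 : ZMod n), (AB.2 : ZMod n))) (fun ab => (ab.1.val, ab.2.val))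
  · rintro ⟨A, B⟩ h
    simpa using (mem_filter.mp h).2
  · rintro ⟨a, b⟩ h
    simpa [ZMod.val_lt] using h
  · rintro ⟨A, B⟩ h
    simp only [coe_filter, mem_product, mem_range] at h
    simp [ZMod.val_cast_of_lt h.1.1, ZMod.val_cast_of_lt h.1.2]
  · rintro ⟨a, b⟩ -
    simp

theorem card_filter_range_mul_prod_of_periodic {m q : ℕ} (hm : 0 < m) (P : ℕ × ℕ → Prop)
    [DecidablePred P] (hP : ∀ x : ℕ × ℕ, P (x.1 % m, x.2 % m) ↔ P x) :
    ((range (m * q) ×ˢ range (m * q)).filter P).card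
      = q ^ 2 * ((range m ×ˢ range m).filter P).card := by
  rw [show q ^ 2 = (range q ×ˢ range q).card by simp [sq], ← card_product]
  apply card_nbij' (fun x => ((x.1 / m, x.2 / m), (x.1 % m, x.2 % m)))
    (fun y => (y.2.1 + m * y.1.1, y.2.2 + m * y.1.2))
  · rintro ⟨A, B⟩ h
    simp only [mem_coe, mem_filter, mem_product, mem_range] at h ⊢
    refine ⟨⟨?_, ?_⟩, ⟨Nat.mod_lt _ hm, Nat.mod_lt _ hm⟩, (hP _).mpr h.2⟩ <;>
      rw [Nat.div_lt_iff_lt_mul hm, mul_comm] <;> [exact h.1.1; exact h.1.2]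
  · rintro ⟨⟨i, j⟩, a, b⟩ h
    simp only [mem_coe, mem_filter, mem_product, mem_range] at h ⊢
    obtain ⟨⟨hi, hj⟩, ⟨ha, hb⟩, hab⟩ := h
    refine ⟨⟨by nlinarith, by nlinarith⟩, (hP _).mp ?_⟩
    simpa [Nat.mod_eq_of_lt ha, Nat.mod_eq_of_lt hb] using hab
  · rintro ⟨A, B⟩ -
    simp [Nat.mod_add_div]
  · rintro ⟨⟨i, j⟩, a, b⟩ h
    simp only [mem_coe, mem_filter, mem_product, mem_range] at h
    obtain ⟨-, ⟨ha, hb⟩, -⟩ := h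
    simp [Nat.add_mul_div_left _ _ hm, Nat.div_eq_of_lt ha, Nat.div_eq_of_lt hb,
      Nat.mod_eq_of_lt ha, Nat.mod_eq_of_lt hb]

def primitiveDiscriminantDvdPairs (l m n : ℕ) : Finset (ℕ × ℕ) :=
  (range n ×ˢ range n).filter fun AB =>
    ¬ (l ∣ AB.1 ∧ l ∣ AB.2) ∧ m ∣ 4 * AB.1 ^ 3 + 27 * AB.2 ^ 2

theorem card_primitiveDiscriminantDvdPairs_prime_pow {l k : ℕ} (hl : l.Prime) (hl6 : l.Coprime 6)
    (hk : 0 < k) : (primitiveDiscriminantDvdPairs l (l ^ k) (l ^ k)).card = (l ^ k).totient := by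
  have : NeZero (l ^ k) := ⟨pow_ne_zero _ hl.ne_zero⟩
  have hunit (A : ℕ) : IsUnit (A : ZMod (l ^ k)) ↔ ¬ l ∣ A := by
    rw [ZMod.isUnit_iff_coprime, Nat.coprime_pow_right_iff hk, Nat.coprime_comm,
      hl.coprime_iff_not_dvd]
  have hdisc (A B : ℕ) : l ^ k ∣ 4 * A ^ 3 + 27 * B ^ 2 ↔
      4 * (A : ZMod (l ^ k)) ^ 3 + 27 * (B : ZMod (l ^ k)) ^ 2 = 0 := by
    rw [← ZMod.natCast_eq_zero_iff]
    push_cast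
    rfl
  classical
  rw [← card_primitive_discriminant_zero_zmod (hl6.pow_left k),
    ← card_filter_range_prod_eq_card_filter_zmod, primitiveDiscriminantDvdPairs]
  congr 1
  refine filter_congr fun AB _ => ?_
  simp only [hunit, hdisc, not_and_or]

theorem card_primitiveDiscriminantDvdPairs_mul {l m : ℕ} (hm : 0 < m) (hlm : l ∣ m) (q : ℕ) :
    (primitiveDiscriminantDvdPairs l m (m * q)).card
      = q ^ 2 * (primitiveDiscriminantDvdPairs l m m).card := by
  refine card_filter_range_mul_prod_of_periodic hm _ fun AB => ?_
  have hA := Nat.mod_modEq AB.1 m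
  have hB := Nat.mod_modEq AB.2 m
  rw [hA.dvd_iff hlm, hB.dvd_iff hlm,
    ((hA.pow 3).mul_left 4 |>.add ((hB.pow 2).mul_left 27)).dvd_iff dvd_rfl]

theorem card_kodaira_Ip_residues_general (p l : ℕ) (hp : p.Prime) (hl : l.Prime)
    (hl5 : 5 ≤ l) :
    ((Finset.range (l ^ (p + 1)) ×ˢ Finset.range (l ^ (p + 1))).filter fun AB =>
      ¬ (l ∣ AB.1 ∧ l ∣ AB.2) ∧ l ^ p ∣ (4 * AB.1 ^ 3 + 27 * AB.2 ^ 2) ∧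
        ¬ l ^ (p + 1) ∣ (4 * AB.1 ^ 3 + 27 * AB.2 ^ 2)).card
      = l ^ p * (l - 1) ^ 2 := by
  have hl6 : l.Coprime 6 :=
    Nat.Coprime.mul_right ((Nat.coprime_primes hl Nat.prime_two).mpr (by omega))
      ((Nat.coprime_primes hl Nat.prime_three).mpr (by omega))
  have hsub : primitiveDiscriminantDvdPairs l (l ^ (p + 1)) (l ^ (p + 1)) ⊆
      primitiveDiscriminantDvdPairs l (l ^ p) (l ^ (p + 1)) :=
    monotone_filter_right _ fun _ _ => And.imp_right (pow_dvd_pow l p.le_succ).trans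
  have hlift : (primitiveDiscriminantDvdPairs l (l ^ p) (l ^ (p + 1))).card
      = l ^ 2 * (l ^ p).totient := by
    rw [pow_succ,
      card_primitiveDiscriminantDvdPairs_mul (pow_pos hl.pos p) (dvd_pow_self l hp.ne_zero),
      card_primitiveDiscriminantDvdPairs_prime_pow hl hl6 hp.pos]
  calc _ = (primitiveDiscriminantDvdPairs l (l ^ p) (l ^ (p + 1)) \
        primitiveDiscriminantDvdPairs l (l ^ (p + 1)) (l ^ (p + 1))).card := by
        congr 1
        ext AB
        simp only [primitiveDiscriminantDvdPairs, mem_sdiff, mem_filter]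
        tauto
    _ = l ^ 2 * (l ^ p).totient - (l ^ (p + 1)).totient := by
        rw [card_sdiff_of_subset hsub, hlift,
          card_primitiveDiscriminantDvdPairs_prime_pow hl hl6 p.succ_pos]
    _ = l ^ p * (l - 1) ^ 2 := by
        rw [Nat.totient_prime_pow hl hp.pos, Nat.totient_prime_pow hl p.succ_pos]
        obtain ⟨q, rfl⟩ := Nat.exists_eq_succ_of_ne_zero hp.ne_zero
        obtain ⟨k, rfl⟩ := Nat.exists_eq_succ_of_ne_zero hl.ne_zero
        simp only [Nat.succ_sub_one, Nat.succ_eq_add_one]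
        exact Nat.sub_eq_of_eq_add (by ring)

/-- For primes `p ≥ 5` and `l ≠ p`, `l ≥ 5`, the number of residue pairs
`(A, B)` modulo `l^(p+1)` such that `(A, B) mod l ≠ (0, 0)`, `l^p ∣ 4A³ + 27B²` and
`l^(p+1) ∤ 4A³ + 27B²` equals `l^p (l − 1)²`. -/
theorem card_kodaira_Ip_residues (p l : ℕ) (hp : p.Prime) (hl : l.Prime)
    (hp5 : 5 ≤ p) (hl5 : 5 ≤ l) (hlp : l ≠ p) :
    ((Finset.range (l ^ (p + 1)) ×ˢ Finset.range (l ^ (p + 1))).filter fun AB =>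
      ¬ (l ∣ AB.1 ∧ l ∣ AB.2) ∧ l ^ p ∣ (4 * AB.1 ^ 3 + 27 * AB.2 ^ 2) ∧
        ¬ l ^ (p + 1) ∣ (4 * AB.1 ^ 3 + 27 * AB.2 ^ 2)).card
      = l ^ p * (l - 1) ^ 2 :=
  card_kodaira_Ip_residues_general p l hp hl hl5
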